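/- Let D be a triangulated category with split idempotents and let Z be a full subcategory of D. Then: (1) Z is coreflective and satisfies Σ(Z) ⊆ Z if and only if Z is precovering and closed under taking direct summands and cones; (2) Z is reflective and satisfies Σ⁻¹(Z) ⊆ Z if and only if Z is preenveloping and closed under taking direct summands and cocones. -/

import Mathlib

/-!
A `Z`-coreflection of `A` is the same as a `Z`-precover `c : R ⟶ A` through which no nonzero
morphism from an object of `Z` to `R` composes to zero. To build one, take a precover
`f₀ : X₀ ⟶ A`, a precover `X₁ ⟶ V` of a cocone `V ⟶ X₀` of `f₀`, and the cone `p : X₀ ⟶ Q` of the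
composite `X₁ ⟶ X₀`. Then `Q ∈ Z`, `f₀` factors as `p ≫ f`, and for a lift `s : Q ⟶ X₀` of `f`
the idempotent `s ≫ p` splits off a summand `R` of `Q` on which `f` restricts to a coreflection.

Conversely, if `X₁ ⟶ X₂ ⟶ X₃ ⟶ X₁⟦1⟧` is distinguished with `X₁, X₂, X₁⟦1⟧ ∈ Z`, the long exact
`Hom`-sequences produce a section of the coreflection `R ⟶ X₃`, which is therefore an
isomorphism. These arguments see triangles only through pseudokernels and pseudocokernels, which
trade places in `Dᵒᵖ`, so the reflective half is the coreflective argument run in `Dᵒᵖ`.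
-/

open CategoryTheory Limits

universe w v u

namespace PaperStmt

variable {C : Type u} [Category.{v} C]

/-- The subcategory (object property) `B` is closed under isomorphisms. -/
def ClosedUnderIso (B : C → Prop) : Prop :=
  ∀ ⦃X Y : C⦄, (X ≅ Y) → B X → B Y

/-- `B` is closed under direct summands (retracts). -/
def ClosedUnderSummands (B : C → Prop) : Prop :=
  ∀ ⦃X Y : C⦄, B X → (∃ (s : Y ⟶ X) (r : X ⟶ Y), s ≫ r = 𝟙 Y) → B Y

/-- `f : X ⟶ A` is a `B`-precover of `A`. -/
def IsPrecover (B : C → Prop) {X A : C} (f : X ⟶ A) : Prop :=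
  B X ∧ ∀ ⦃Y : C⦄, B Y → ∀ g : Y ⟶ A, ∃ h : Y ⟶ X, h ≫ f = g

/-- `B` is a precovering subcategory. -/
def Precovering (B : C → Prop) : Prop :=
  ∀ A : C, ∃ (X : C) (f : X ⟶ A), IsPrecover B f

/-- `f : A ⟶ X` is a `B`-preenvelope of `A`. -/
def IsPreenvelope (B : C → Prop) {A X : C} (f : A ⟶ X) : Prop :=
  B X ∧ ∀ ⦃Y : C⦄, B Y → ∀ g : A ⟶ Y, ∃ h : X ⟶ Y, f ≫ h = g

/-- `B` is a preenveloping subcategory. -/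
def Preenveloping (B : C → Prop) : Prop :=
  ∀ A : C, ∃ (X : C) (f : A ⟶ X), IsPreenvelope B f

/-- `f : X ⟶ A` is a `B`-coreflection of `A`. -/
def IsCoreflection (B : C → Prop) {X A : C} (f : X ⟶ A) : Prop :=
  B X ∧ ∀ ⦃Y : C⦄, B Y → ∀ g : Y ⟶ A, ∃! h : Y ⟶ X, h ≫ f = g

/-- `B` is a coreflective subcategory: the inclusion has a right adjoint. -/
def IsCoreflectiveSub (B : C → Prop) : Prop :=
  (ObjectProperty.ι B).IsLeftAdjoint

/-- `B` is a reflective subcategory: the inclusion has a left adjoint. -/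
def IsReflectiveSub (B : C → Prop) : Prop :=
  (ObjectProperty.ι B).IsRightAdjoint

section Zero

variable [HasZeroMorphisms C]

/-- `k` is a pseudokernel of `f`. -/
def IsPseudokernel {K X Y : C} (f : X ⟶ Y) (k : K ⟶ X) : Prop :=
  k ≫ f = 0 ∧ ∀ ⦃K' : C⦄ (k' : K' ⟶ X), k' ≫ f = 0 → ∃ t : K' ⟶ K, t ≫ k = k'

/-- `c` is a pseudocokernel of `f`. -/
def IsPseudocokernel {X Y Q : C} (f : X ⟶ Y) (c : Y ⟶ Q) : Prop :=
  f ≫ c = 0 ∧ ∀ ⦃Q' : C⦄ (c' : Y ⟶ Q'), f ≫ c' = 0 → ∃ t : Q ⟶ Q', c ≫ t = c'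

end Zero

/-- `C` has pseudokernels. -/
def HasPseudokernels (C : Type u) [Category.{v} C] [HasZeroMorphisms C] : Prop :=
  ∀ ⦃X Y : C⦄ (f : X ⟶ Y), ∃ (K : C) (k : K ⟶ X), IsPseudokernel f k

/-- `C` has pseudocokernels. -/
def HasPseudocokernels (C : Type u) [Category.{v} C] [HasZeroMorphisms C] : Prop :=
  ∀ ⦃X Y : C⦄ (f : X ⟶ Y), ∃ (Q : C) (c : Y ⟶ Q), IsPseudocokernel f c

end PaperStmt

namespace PaperStmt

open CategoryTheory.Pretriangulated
open Opposite ZeroObject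

section Category

variable {C : Type u} [Category.{v} C] {Z : ObjectProperty C}

def IsReflection (B : C → Prop) {A X : C} (f : A ⟶ X) : Prop :=
  B X ∧ ∀ ⦃Y : C⦄, B Y → ∀ g : A ⟶ Y, ∃! h : X ⟶ Y, f ≫ h = g

lemma hasTerminal_costructuredArrow_ι_iff (A : C) :
    HasTerminal (CostructuredArrow Z.ι A) ↔ ∃ (X : C) (f : X ⟶ A), IsCoreflection Z f := by
  constructor
  · intro _
    let T := ⊤_ CostructuredArrow Z.ι A
    refine ⟨T.left.obj, T.hom, T.left.property, fun Y hY g => ?_⟩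
    let G := CostructuredArrow.mk (show Z.ι.obj ⟨Y, hY⟩ ⟶ A from g)
    refine ⟨(terminal.from G).left.hom, CostructuredArrow.w (terminal.from G), fun h hh => ?_⟩
    exact congrArg (fun φ => φ.left.hom)
      (terminal.hom_ext (CostructuredArrow.homMk (ObjectProperty.homMk h) hh : G ⟶ T) _)
  · rintro ⟨X, f, hX, hf⟩
    choose lift hlift huniq using fun (G : CostructuredArrow Z.ι A) => hf G.left.property G.hom
    refine IsTerminal.hasTerminal
      (X := CostructuredArrow.mk (show Z.ι.obj ⟨X, hX⟩ ⟶ A from f)) <| IsTerminal.ofUniqueHom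
        (fun G => CostructuredArrow.homMk (ObjectProperty.homMk (lift G)) (hlift G))
        (fun G m => ?_)
    ext
    exact huniq G _ (CostructuredArrow.w m)

lemma isCoreflectiveSub_iff :
    IsCoreflectiveSub Z ↔ ∀ A : C, ∃ (X : C) (f : X ⟶ A), IsCoreflection Z f := by
  simp only [IsCoreflectiveSub, isLeftAdjoint_iff_hasTerminal_costructuredArrow,
    hasTerminal_costructuredArrow_ι_iff]

lemma hasInitial_structuredArrow_ι_iff (A : C) :
    HasInitial (StructuredArrow A Z.ι) ↔ ∃ (X : C) (f : A ⟶ X), IsReflection Z f := by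
  constructor
  · intro _
    let I := ⊥_ StructuredArrow A Z.ι
    refine ⟨I.right.obj, I.hom, I.right.property, fun Y hY g => ?_⟩
    let G := StructuredArrow.mk (show A ⟶ Z.ι.obj ⟨Y, hY⟩ from g)
    refine ⟨(initial.to G).right.hom, StructuredArrow.w (initial.to G), fun h hh => ?_⟩
    exact congrArg (fun φ => φ.right.hom)
      (initial.hom_ext (StructuredArrow.homMk (ObjectProperty.homMk h) hh : I ⟶ G) _)
  · rintro ⟨X, f, hX, hf⟩
    choose desc hdesc huniq using fun (G : StructuredArrow A Z.ι) => hf G.right.property G.hom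
    refine IsInitial.hasInitial
      (X := StructuredArrow.mk (show A ⟶ Z.ι.obj ⟨X, hX⟩ from f)) <| IsInitial.ofUniqueHom
        (fun G => StructuredArrow.homMk (ObjectProperty.homMk (desc G)) (hdesc G))
        (fun G m => ?_)
    ext
    exact huniq G _ (StructuredArrow.w m)

lemma isReflectiveSub_iff :
    IsReflectiveSub Z ↔ ∀ A : C, ∃ (X : C) (f : A ⟶ X), IsReflection Z f := by
  simp only [IsReflectiveSub, isRightAdjoint_iff_hasInitial_structuredArrow,
    hasInitial_structuredArrow_ι_iff]

lemma IsCoreflection.isPrecover {X A : C} {f : X ⟶ A} (hf : IsCoreflection Z f) :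
    IsPrecover Z f :=
  ⟨hf.1, fun _ hY g => (hf.2 hY g).exists⟩

lemma IsReflection.isPreenvelope {A X : C} {f : A ⟶ X} (hf : IsReflection Z f) :
    IsPreenvelope Z f :=
  ⟨hf.1, fun _ hY g => (hf.2 hY g).exists⟩

lemma IsCoreflection.mem_of_comp_eq_id (hiso : ClosedUnderIso Z) {R A : C} {c : R ⟶ A}
    (hc : IsCoreflection Z c) (σ : A ⟶ R) (hσ : σ ≫ c = 𝟙 A) : Z A :=
  have hcσ : c ≫ σ = 𝟙 R :=
    (hc.2 hc.1 c).unique (by rw [Category.assoc, hσ, Category.comp_id]) (Category.id_comp c)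
  hiso ⟨c, σ, hcσ, hσ⟩ hc.1

lemma closedUnderSummands_of_isCoreflection (hiso : ClosedUnderIso Z)
    (hZ : ∀ A : C, ∃ (X : C) (f : X ⟶ A), IsCoreflection Z f) : ClosedUnderSummands Z := by
  rintro X Y hX ⟨s, r, hsr⟩
  obtain ⟨R, c, hc⟩ := hZ Y
  obtain ⟨h, hh, -⟩ := hc.2 hX r
  exact hc.mem_of_comp_eq_id hiso (s ≫ h) (by rw [Category.assoc, hh, hsr])

lemma mem_zero_of_closedUnderSummands [HasZeroMorphisms C] [HasZeroObject C]
    (hsum : ClosedUnderSummands Z) {X : C} (hX : Z X) : Z 0 :=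
  hsum hX ⟨0, 0, (isZero_zero C).eq_of_src _ _⟩

end Category

section Preadditive

variable {C : Type u} [Category.{v} C] [Preadditive C] {Z : ObjectProperty C}

lemma IsCoreflection.mem_of_isPseudocokernel (hiso : ClosedUnderIso Z)
    {X₁ X₂ X₃ X₄ R : C} {f : X₁ ⟶ X₂} {g : X₂ ⟶ X₃} {h : X₃ ⟶ X₄}
    (hg : IsPseudocokernel f g) (hh : IsPseudocokernel g h)
    (h₁ : Z X₁) (h₂ : Z X₂) (h₄ : Z X₄) {c : R ⟶ X₃} (hc : IsCoreflection Z c) : Z X₃ := by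
  obtain ⟨k, hk, -⟩ := hc.2 h₂ g
  have hfk : f ≫ k = 0 :=
    (hc.2 h₁ (f ≫ g)).unique (by rw [Category.assoc, hk]) (by rw [hg.1, zero_comp])
  obtain ⟨l, hl⟩ := hg.2 k hfk
  obtain ⟨v, hv⟩ := hh.2 (𝟙 X₃ - l ≫ c)
    (by rw [Preadditive.comp_sub, Category.comp_id, ← Category.assoc, hl, hk, sub_self])
  obtain ⟨v', hv', -⟩ := hc.2 h₄ v
  refine hc.mem_of_comp_eq_id hiso (l + h ≫ v') ?_
  rw [Preadditive.add_comp, Category.assoc, hv', hv, add_sub_cancel]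

lemma isCoreflection_of_isPrecover {X A : C} {f : X ⟶ A} (hf : IsPrecover Z f)
    (hker : ∀ ⦃Y : C⦄, Z Y → ∀ t : Y ⟶ X, t ≫ f = 0 → t = 0) : IsCoreflection Z f := by
  refine ⟨hf.1, fun Y hY g => ?_⟩
  obtain ⟨h, hh⟩ := hf.2 hY g
  refine ⟨h, hh, fun h' hh' => ?_⟩
  rw [← sub_eq_zero]
  exact hker hY _ (by rw [Preadditive.sub_comp, hh, hh', sub_self])

lemma isCoreflection_of_retract {R Q A : C} {f : Q ⟶ A} (hf : IsPrecover Z f) (hR : Z R)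
    {i : R ⟶ Q} {r : Q ⟶ R} (hir : i ≫ r = 𝟙 R) (hfix : r ≫ i ≫ f = f)
    (hker : ∀ ⦃Y : C⦄, Z Y → ∀ t : Y ⟶ Q, t ≫ f = 0 → t ≫ r = 0) :
    IsCoreflection Z (i ≫ f) := by
  refine isCoreflection_of_isPrecover ⟨hR, fun Y hY g => ?_⟩ fun Y hY t ht => ?_
  · obtain ⟨h, hh⟩ := hf.2 hY g
    exact ⟨h ≫ r, by rw [Category.assoc, hfix, hh]⟩
  · rw [← Category.comp_id t, ← hir, ← Category.assoc, hker hY _ (by rwa [Category.assoc])]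

lemma exists_isCoreflection_of_isPrecover_comp [IsIdempotentComplete C]
    (hsum : ClosedUnderSummands Z)
    {X₀ Q A : C} {p : X₀ ⟶ Q} {f : Q ⟶ A} (hpf : IsPrecover Z (p ≫ f)) (hQ : Z Q)
    (hker : ∀ ⦃Y : C⦄, Z Y → ∀ t : Y ⟶ X₀, t ≫ p ≫ f = 0 → t ≫ p = 0) :
    ∃ (R : C) (c : R ⟶ A), IsCoreflection Z c := by
  obtain ⟨s, hs⟩ := hpf.2 hQ f
  have hf : IsPrecover Z f := ⟨hQ, fun Y hY g =>
    let ⟨h, hh⟩ := hpf.2 hY g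
    ⟨h ≫ p, by rw [Category.assoc, hh]⟩⟩
  have hpsp : p ≫ s ≫ p = p := by
    have h := hker hpf.1 (p ≫ s - 𝟙 X₀)
      (by rw [Preadditive.sub_comp, Category.assoc, hs, Category.id_comp, sub_self])
    rwa [Preadditive.sub_comp, Category.assoc, Category.id_comp, sub_eq_zero] at h
  obtain ⟨R, i, r, hir, hri⟩ := IsIdempotentComplete.idempotents_split Q (s ≫ p)
    (by rw [Category.assoc, hpsp])
  refine ⟨R, i ≫ f,
    isCoreflection_of_retract hf (hsum hQ ⟨i, r, hir⟩) hir ?_ fun Y hY t ht => ?_⟩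
  · rw [← Category.assoc, hri, Category.assoc, hs]
  · have htr : t ≫ r ≫ i = 0 := by
      rw [hri, ← Category.assoc, hker hY _ (by rw [Category.assoc, hs, ht])]
    rw [← Category.comp_id (t ≫ r), ← hir, ← Category.assoc, Category.assoc t, htr, zero_comp]

lemma exists_isCoreflection [IsIdempotentComplete C] (hpk : HasPseudokernels C)
    (hpre : Precovering Z) (hsum : ClosedUnderSummands Z)
    (hcok : ∀ ⦃X Y : C⦄ (d : X ⟶ Y), Z X → Z Y →
      ∃ (Q : C) (p : Y ⟶ Q), IsPseudocokernel d p ∧ Z Q)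
    (A : C) : ∃ (R : C) (c : R ⟶ A), IsCoreflection Z c := by
  obtain ⟨X₀, f₀, hf₀⟩ := hpre A
  obtain ⟨V, w, hw⟩ := hpk f₀
  obtain ⟨X₁, g, hg⟩ := hpre V
  obtain ⟨Q, p, hp, hQ⟩ := hcok (g ≫ w) hg.1 hf₀.1
  obtain ⟨f, rfl⟩ := hp.2 f₀ (by rw [Category.assoc, hw.1, comp_zero])
  refine exists_isCoreflection_of_isPrecover_comp hsum hf₀ hQ fun Y hY t ht => ?_
  obtain ⟨u, rfl⟩ := hw.2 t ht
  obtain ⟨v, rfl⟩ := hg.2 hY u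
  rw [Category.assoc v, Category.assoc, hp.1, comp_zero]

end Preadditive

section Opposite

variable {C : Type u} [Category.{v} C] {Z : ObjectProperty C}

lemma ClosedUnderIso.op (hiso : ClosedUnderIso Z) : ClosedUnderIso Z.op :=
  fun _ _ e hX => hiso e.unop.symm hX

lemma closedUnderSummands_op_iff : ClosedUnderSummands Z.op ↔ ClosedUnderSummands Z := by
  constructor
  · rintro h X Y hX ⟨s, r, hsr⟩
    exact h (X := op X) (Y := op Y) hX ⟨r.op, s.op, by rw [← op_comp, hsr, op_id]⟩
  · rintro h X Y hX ⟨s, r, hsr⟩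
    exact h hX ⟨r.unop, s.unop, by rw [← unop_comp, hsr, unop_id]⟩

lemma Preenveloping.op (hpre : Preenveloping Z) : Precovering Z.op := fun A =>
  let ⟨X, f, hX, hf⟩ := hpre A.unop
  ⟨Opposite.op X, f.op, hX, fun Y hY g =>
    let ⟨h, hh⟩ := hf hY g.unop
    ⟨h.op, by rw [← op_comp, hh, Quiver.Hom.op_unop]⟩⟩

lemma isCoreflection_op_iff {A X : C} (f : A ⟶ X) :
    IsCoreflection Z.op f.op ↔ IsReflection Z f := by
  constructor
  · rintro ⟨hX, hf⟩
    refine ⟨hX, fun Y hY g => ?_⟩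
    obtain ⟨h, hh, huniq⟩ := hf (Y := op Y) hY g.op
    exact ⟨h.unop, Quiver.Hom.op_inj hh, fun h' hh' => Quiver.Hom.op_inj
      (huniq h'.op (congrArg Quiver.Hom.op hh'))⟩
  · rintro ⟨hX, hf⟩
    refine ⟨hX, fun Y hY g => ?_⟩
    obtain ⟨h, hh, huniq⟩ := hf hY g.unop
    exact ⟨h.op, Quiver.Hom.unop_inj hh, fun h' hh' => Quiver.Hom.unop_inj
      (huniq h'.unop (congrArg Quiver.Hom.unop hh'))⟩

variable [HasZeroMorphisms C]

lemma IsPseudokernel.op {K X Y : C} {f : X ⟶ Y} {k : K ⟶ X} (hk : IsPseudokernel f k) :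
    IsPseudocokernel f.op k.op :=
  ⟨by rw [← op_comp, hk.1, op_zero], fun _ c hc =>
    let ⟨t, ht⟩ := hk.2 c.unop (by simpa using congrArg Quiver.Hom.unop hc)
    ⟨t.op, by rw [← op_comp, ht, Quiver.Hom.op_unop]⟩⟩

lemma IsPseudocokernel.op {X Y Q : C} {f : X ⟶ Y} {c : Y ⟶ Q} (hc : IsPseudocokernel f c) :
    IsPseudokernel f.op c.op :=
  ⟨by rw [← op_comp, hc.1, op_zero], fun _ k hk =>
    let ⟨t, ht⟩ := hc.2 k.unop (by simpa using congrArg Quiver.Hom.unop hk)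
    ⟨t.op, by rw [← op_comp, ht, Quiver.Hom.op_unop]⟩⟩

lemma HasPseudocokernels.op (h : HasPseudocokernels C) : HasPseudokernels Cᵒᵖ := fun _ _ f =>
  let ⟨Q, c, hc⟩ := h f.unop
  ⟨Opposite.op Q, c.op, hc.op⟩

end Opposite

section Pretriangulated

variable {D : Type u} [Category.{v} D] [Preadditive D] [HasZeroObject D] [HasShift D ℤ]
  [∀ n : ℤ, (shiftFunctor D n).Additive] [Pretriangulated D]

lemma isPseudocokernel_mor₂ {T : Triangle D} (hT : T ∈ distTriang D) :
    IsPseudocokernel T.mor₁ T.mor₂ :=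
  ⟨comp_distTriang_mor_zero₁₂ T hT, fun _ c hc =>
    let ⟨t, ht⟩ := Triangle.yoneda_exact₂ T hT c hc
    ⟨t, ht.symm⟩⟩

lemma isPseudocokernel_mor₃ {T : Triangle D} (hT : T ∈ distTriang D) :
    IsPseudocokernel T.mor₂ T.mor₃ :=
  isPseudocokernel_mor₂ (rot_of_distTriang T hT)

lemma isPseudokernel_mor₁ {T : Triangle D} (hT : T ∈ distTriang D) :
    IsPseudokernel T.mor₂ T.mor₁ :=
  ⟨comp_distTriang_mor_zero₁₂ T hT, fun _ k hk =>
    let ⟨t, ht⟩ := Triangle.coyoneda_exact₂ T hT k hk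
    ⟨t, ht.symm⟩⟩

lemma hasPseudokernels : HasPseudokernels D := fun _ _ f =>
  let ⟨_, _, _, hT⟩ := distinguished_cocone_triangle₁ f
  ⟨_, _, isPseudokernel_mor₁ hT⟩

lemma hasPseudocokernels : HasPseudocokernels D := fun _ _ f =>
  let ⟨_, _, _, hT⟩ := distinguished_cocone_triangle f
  ⟨_, _, isPseudocokernel_mor₂ hT⟩

variable {Z : ObjectProperty D}

lemma shift_one_mem_of_cones (hzero : Z 0)
    (hcone : ∀ T ∈ distTriang D, Z T.obj₁ → Z T.obj₂ → Z T.obj₃) {X : D} (hX : Z X) :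
    Z (X⟦(1 : ℤ)⟧) :=
  hcone _ (contractible_distinguished₂ X) hX hzero

lemma shift_neg_one_mem_of_cocones (hzero : Z 0)
    (hcocone : ∀ T ∈ distTriang D, Z T.obj₂ → Z T.obj₃ → Z T.obj₁) {X : D} (hX : Z X) :
    Z (X⟦(-1 : ℤ)⟧) :=
  hcocone _ (inv_rot_of_distTriang _ (contractible_distinguished₁ X)) hzero hX

lemma isCoreflectiveSub_and_shift_iff [IsIdempotentComplete D] (hiso : ClosedUnderIso Z) :
    (IsCoreflectiveSub Z ∧ ∀ X : D, Z X → Z (X⟦(1 : ℤ)⟧)) ↔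
      (Precovering Z ∧ ClosedUnderSummands Z ∧
        ∀ T ∈ distTriang D, Z T.obj₁ → Z T.obj₂ → Z T.obj₃) := by
  rw [isCoreflectiveSub_iff]
  constructor
  · rintro ⟨hco, hshift⟩
    refine ⟨fun A => ?_, closedUnderSummands_of_isCoreflection hiso hco, fun T hT h₁ h₂ => ?_⟩
    · obtain ⟨X, f, hf⟩ := hco A
      exact ⟨X, f, hf.isPrecover⟩
    · obtain ⟨_, _, hc⟩ := hco T.obj₃
      exact hc.mem_of_isPseudocokernel hiso (isPseudocokernel_mor₂ hT)
        (isPseudocokernel_mor₃ hT) h₁ h₂ (hshift _ h₁)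
  · rintro ⟨hpre, hsum, hcone⟩
    have hcok : ∀ ⦃X Y : D⦄ (d : X ⟶ Y), Z X → Z Y →
        ∃ (Q : D) (p : Y ⟶ Q), IsPseudocokernel d p ∧ Z Q := fun _ _ d hX hY =>
      let ⟨_, _, _, hT⟩ := distinguished_cocone_triangle d
      ⟨_, _, isPseudocokernel_mor₂ hT, hcone _ hT hX hY⟩
    obtain ⟨X, _, hX, -⟩ := hpre 0
    exact ⟨exists_isCoreflection hasPseudokernels hpre hsum hcok,
      fun _ => shift_one_mem_of_cones (mem_zero_of_closedUnderSummands hsum hX) hcone⟩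

lemma isReflectiveSub_and_shift_iff [IsIdempotentComplete D] (hiso : ClosedUnderIso Z) :
    (IsReflectiveSub Z ∧ ∀ X : D, Z X → Z (X⟦(-1 : ℤ)⟧)) ↔
      (Preenveloping Z ∧ ClosedUnderSummands Z ∧
        ∀ T ∈ distTriang D, Z T.obj₂ → Z T.obj₃ → Z T.obj₁) := by
  rw [isReflectiveSub_iff]
  constructor
  · rintro ⟨hre, hshift⟩
    have hco : ∀ A : Dᵒᵖ, ∃ (X : Dᵒᵖ) (f : X ⟶ A), IsCoreflection Z.op f := fun A =>
      let ⟨X, f, hf⟩ := hre A.unop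
      ⟨op X, f.op, (isCoreflection_op_iff f).2 hf⟩
    refine ⟨fun A => ?_,
      closedUnderSummands_op_iff.1 (closedUnderSummands_of_isCoreflection hiso.op hco),
      fun T hT h₂ h₃ => ?_⟩
    · obtain ⟨X, f, hf⟩ := hre A
      exact ⟨X, f, hf.isPreenvelope⟩
    · obtain ⟨_, _, hc⟩ := hco (op T.obj₁)
      exact hc.mem_of_isPseudocokernel hiso.op (isPseudokernel_mor₁ hT).op
        (isPseudokernel_mor₁ (inv_rot_of_distTriang T hT)).op h₃ h₂ (hshift _ h₃)
  · rintro ⟨hpre, hsum, hcocone⟩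
    have hcok : ∀ ⦃X Y : Dᵒᵖ⦄ (d : X ⟶ Y), Z.op X → Z.op Y →
        ∃ (Q : Dᵒᵖ) (p : Y ⟶ Q), IsPseudocokernel d p ∧ Z.op Q := fun _ _ d hX hY =>
      let ⟨_, _, _, hT⟩ := distinguished_cocone_triangle₁ d.unop
      ⟨_, _, (isPseudokernel_mor₁ hT).op, hcocone _ hT hY hX⟩
    obtain ⟨X, _, hX, -⟩ := hpre 0
    refine ⟨fun A => ?_,
      fun _ => shift_neg_one_mem_of_cocones (mem_zero_of_closedUnderSummands hsum hX) hcocone⟩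
    obtain ⟨X, f, hf⟩ := exists_isCoreflection hasPseudocokernels.op hpre.op
      (closedUnderSummands_op_iff.2 hsum) hcok (op A)
    exact ⟨X.unop, f.unop, (isCoreflection_op_iff f.unop).1 hf⟩

end Pretriangulated

/-- Corollary 4.4: in a triangulated category with split idempotents, a
subcategory is coreflective and stable under `Σ` iff it is precovering and closed under
direct summands and cones; dually for reflective subcategories. -/
theorem triangulated_coreflective_reflective_iff
    {D : Type u} [Category.{v} D] [Preadditive D] [HasZeroObject D] [HasShift D ℤ]
    [∀ n : ℤ, (shiftFunctor D n).Additive] [Pretriangulated D] [IsTriangulated D]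
    [IsIdempotentComplete D]
    (Z : D → Prop) (hiso : ClosedUnderIso Z) :
    ((IsCoreflectiveSub Z ∧ ∀ X : D, Z X → Z (X⟦(1 : ℤ)⟧)) ↔
      (Precovering Z ∧ ClosedUnderSummands Z ∧
        ∀ (T : Triangle D), (T ∈ distTriang D) → Z T.obj₁ → Z T.obj₂ → Z T.obj₃)) ∧
    ((IsReflectiveSub Z ∧ ∀ X : D, Z X → Z (X⟦(-1 : ℤ)⟧)) ↔
      (Preenveloping Z ∧ ClosedUnderSummands Z ∧
        ∀ (T : Triangle D), (T ∈ distTriang D) → Z T.obj₂ → Z T.obj₃ → Z T.obj₁)) :=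
  ⟨isCoreflectiveSub_and_shift_iff hiso, isReflectiveSub_and_shift_iff hiso⟩

end PaperStmt
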